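/- arXiv:1503.02468 — 3 statements merged into one kernel-verified Lean document; each statement's English description precedes it below -/
import Mathlib

section
/- A genealogical tree F (a set of abstract families satisfying the parent/child axioms) consists of linearly independent vectors in ℤ^m: if ∑_k α_k f_k = 0 with α_k ∈ ℚ and f_k ∈ F distinct, then all α_k = 0. -/
/-- The (1-indexed) generation number of a basis index `j` of `ℤ^(N·2^(N−1))`:
`e_j ∈ A_i` iff `(i−1)·2^(N−1) + 1 ≤ j + 1 ≤ i·2^(N−1)` (0-indexed `j`). -/
def genOf (N : ℕ) (j : Fin (N * 2 ^ (N - 1))) : ℕ := (j : ℕ) / 2 ^ (N - 1) + 1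

/-- An abstract family: two distinct parents in generation `gen` and two distinct
children in generation `gen + 1`, with `1 ≤ gen ≤ N − 1`. -/
structure AbstractFamily (N : ℕ) where
  gen : ℕ
  j1 : Fin (N * 2 ^ (N - 1))
  j2 : Fin (N * 2 ^ (N - 1))
  j3 : Fin (N * 2 ^ (N - 1))
  j4 : Fin (N * 2 ^ (N - 1))
  gen_pos : 1 ≤ gen
  gen_le : gen ≤ N - 1
  hj1 : genOf N j1 = gen
  hj2 : genOf N j2 = gen
  hj3 : genOf N j3 = gen + 1
  hj4 : genOf N j4 = gen + 1
  parents_ne : j1 ≠ j2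
  children_ne : j3 ≠ j4

/-- The vector `e_{j₁} + e_{j₂} − e_{j₃} − e_{j₄} ∈ ℤ^m` associated to an abstract family. -/
def AbstractFamily.vec {N : ℕ} (f : AbstractFamily N) : Fin (N * 2 ^ (N - 1)) → ℤ :=
  Pi.single f.j1 1 + Pi.single f.j2 1 - Pi.single f.j3 1 - Pi.single f.j4 1

/-- `j` is a parent in the family `f`. -/
def AbstractFamily.isParent {N : ℕ} (f : AbstractFamily N)
    (j : Fin (N * 2 ^ (N - 1))) : Prop := j = f.j1 ∨ j = f.j2

/-- `j` is a child in the family `f`. -/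
def AbstractFamily.isChild {N : ℕ} (f : AbstractFamily N)
    (j : Fin (N * 2 ^ (N - 1))) : Prop := j = f.j3 ∨ j = f.j4

/-- A genealogical tree: every basis vector of generation `i ≤ N−1` is a parent in
exactly one family of generation number `i`; every basis vector of generation `i ≥ 2`
is a child in exactly one family of generation number `i−1`; and the sibling and the
spouse of a basis vector never coincide. -/
structure IsGenTree (N : ℕ) (F : Set (AbstractFamily N)) : Prop where
  parent_unique : ∀ j : Fin (N * 2 ^ (N - 1)), genOf N j ≤ N - 1 →
    ∃! f : AbstractFamily N, f ∈ F ∧ f.gen = genOf N j ∧ f.isParent j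
  child_unique : ∀ j : Fin (N * 2 ^ (N - 1)), 2 ≤ genOf N j →
    ∃! f : AbstractFamily N, f ∈ F ∧ f.gen = genOf N j - 1 ∧ f.isChild j
  sibling_ne_spouse : ∀ f ∈ F, ∀ g ∈ F, ∀ c s p : Fin (N * 2 ^ (N - 1)),
    ((c = f.j3 ∧ s = f.j4) ∨ (c = f.j4 ∧ s = f.j3)) →
    ((c = g.j1 ∧ p = g.j2) ∨ (c = g.j2 ∧ p = g.j1)) → s ≠ p

/-!
Order the families by generation number. The first parent `j₁` of a family `f` occurs in
no other family `g` of generation number at least that of `f`: not as a parent, by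
uniqueness of the parent family, and not as a child, since the children of `g` lie in
generation `g.gen + 1`. So the coefficient matrix is triangular with respect to the
generation number, and evaluating a vanishing combination at `j₁` kills the coefficient
of `f` by strong induction on the generation.
-/

theorem coeff_eq_zero_of_triangular {ι κ R : Type*} [Fintype ι] [Semiring R] [NoZeroDivisors R]
    (v : ι → κ → R) (w : ι → ℕ) (p : ι → κ) (hdiag : ∀ k, v k (p k) ≠ 0)
    (hoff : ∀ k l, l ≠ k → w k ≤ w l → v l (p k) = 0) (α : ι → R)
    (hsum : ∀ j, ∑ k, α k * v k j = 0) (k : ι) : α k = 0 := by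
  induction hk : w k using Nat.strong_induction_on generalizing k with
  | _ n ih =>
    have hsingle : ∑ l, α l * v l (p k) = α k * v k (p k) := by
      refine Finset.sum_eq_single k (fun l _ hlk => ?_) (by simp)
      rcases lt_or_ge (w l) n with hlt | hge
      · rw [ih (w l) hlt l rfl, zero_mul]
      · rw [hoff k l hlk (hk ▸ hge), mul_zero]
    have hzero := hsum (p k)
    rw [hsingle] at hzero
    exact (mul_eq_zero.mp hzero).resolve_right (hdiag k)

namespace AbstractFamily

variable {N : ℕ} (g : AbstractFamily N) {j : Fin (N * 2 ^ (N - 1))}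

theorem vec_apply (j : Fin (N * 2 ^ (N - 1))) :
    g.vec j = (if j = g.j1 then 1 else 0) + (if j = g.j2 then 1 else 0)
      - (if j = g.j3 then 1 else 0) - (if j = g.j4 then 1 else 0) := by
  simp [vec, Pi.single_apply]

theorem genOf_of_isParent (h : g.isParent j) : genOf N j = g.gen := by
  rcases h with rfl | rfl
  exacts [g.hj1, g.hj2]

theorem genOf_of_isChild (h : g.isChild j) : genOf N j = g.gen + 1 := by
  rcases h with rfl | rfl
  exacts [g.hj3, g.hj4]

theorem vec_apply_j1 : g.vec g.j1 = 1 := by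
  have h3 : g.j1 ≠ g.j3 := fun h => by simpa [g.hj1] using g.genOf_of_isChild (Or.inl h)
  have h4 : g.j1 ≠ g.j4 := fun h => by simpa [g.hj1] using g.genOf_of_isChild (Or.inr h)
  simp [vec_apply, g.parents_ne, h3, h4]

theorem vec_apply_eq_zero (hp : ¬ g.isParent j) (hc : ¬ g.isChild j) : g.vec j = 0 := by
  simp only [isParent, isChild, not_or] at hp hc
  simp [vec_apply, hp.1, hp.2, hc.1, hc.2]

end AbstractFamily

namespace IsGenTree

variable {N : ℕ} {F : Set (AbstractFamily N)} {f g : AbstractFamily N}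

theorem eq_of_isParent (hF : IsGenTree N F) (hf : f ∈ F) (hg : g ∈ F)
    {j : Fin (N * 2 ^ (N - 1))} (hfj : f.isParent j) (hgj : g.isParent j) : f = g := by
  have hgen := f.genOf_of_isParent hfj
  exact (hF.parent_unique j (hgen ▸ f.gen_le)).unique ⟨hf, hgen.symm, hfj⟩
    ⟨hg, (g.genOf_of_isParent hgj).symm, hgj⟩

theorem vec_apply_j1_eq_zero (hF : IsGenTree N F) (hf : f ∈ F) (hg : g ∈ F) (hne : g ≠ f)
    (hgen : f.gen ≤ g.gen) : g.vec f.j1 = 0 := by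
  refine g.vec_apply_eq_zero (fun hp => hne ?_) (fun hc => ?_)
  · exact hF.eq_of_isParent hg hf hp (Or.inl rfl)
  · have := g.genOf_of_isChild hc
    rw [f.hj1] at this
    omega

end IsGenTree

theorem stmt5_general (N : ℕ) (F : Set (AbstractFamily N)) (hF : IsGenTree N F)
    (n : ℕ) (f : Fin n → AbstractFamily N) (hfF : ∀ k, f k ∈ F)
    (hinj : Function.Injective f) (α : Fin n → ℚ)
    (hsum : ∀ j, ∑ k, α k * ((f k).vec j : ℚ) = 0) :
    ∀ k, α k = 0 := by
  refine coeff_eq_zero_of_triangular (fun k j => ((f k).vec j : ℚ)) (fun k => (f k).gen)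
    (fun k => (f k).j1) (fun k => ?_) (fun k l hlk hgen => ?_) α hsum
  · simp [(f k).vec_apply_j1]
  · simp [hF.vec_apply_j1_eq_zero (hfF k) (hfF l) (hinj.ne hlk) hgen]

/-- The family vectors of a genealogical tree are linearly independent over `ℚ`:
any vanishing rational linear combination of distinct families of `F` has all
coefficients zero. -/
theorem stmt5 (N : ℕ) (hN : 2 ≤ N) (F : Set (AbstractFamily N)) (hF : IsGenTree N F)
    (n : ℕ) (f : Fin n → AbstractFamily N) (hfF : ∀ k, f k ∈ F)
    (hinj : Function.Injective f) (α : Fin n → ℚ)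
    (hsum : ∀ j, ∑ k, α k * ((f k).vec j : ℚ) = 0) :
    ∀ k, α k = 0 :=
  stmt5_general N F hF n f hfF hinj α hsum
end

section
/- Let F be a genealogical tree in ℤ^m and ⟨F⟩ = span_ℚ(F) ∩ ℤ^m. Every nonzero λ ∈ ⟨F⟩ has support of cardinality at least 4, and the support has cardinality exactly 4 if and only if λ is a nonzero rational (hence integer) multiple of a single abstract family. -/
/-!
Write `λ = ∑ c_f f` over finitely many families of the tree. Every index is a parent in at most
one family and a child in at most one, so the coordinate of `λ` at an index is the coefficient of
the family it is a parent in minus that of the family it is a child in. Hence `λ` is nonzero on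
the `2a` parents of the `a` families of lowest generation `i₀` and on the `2b` children of the `b`
families of highest generation `i₁`, so its support has at least `2a + 2b ≥ 4` elements.
If it has exactly four, the family `f` of generation `i₀` is unique and `λ` is supported on
generations `i₀` and `i₁ + 1`. If `i₀ < i₁`, then `λ` vanishes on generation `i₀ + 1`: a child of
`f` is then also a parent of some family `g`, whose parents in turn can only be cancelled by `f`,
so the children of `f` are the parents of `g`, i.e. siblings are spouses. So `i₀ = i₁` and `λ` is
a multiple of `f`.
-/

open Finset Finsupp

namespace AbstractFamily

variable {N : ℕ} (f : AbstractFamily N) {j : Fin (N * 2 ^ (N - 1))}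

def parents : Finset (Fin (N * 2 ^ (N - 1))) := {f.j1, f.j2}

def children : Finset (Fin (N * 2 ^ (N - 1))) := {f.j3, f.j4}

lemma mem_parents : j ∈ f.parents ↔ f.isParent j := by simp [parents, isParent]

lemma mem_children : j ∈ f.children ↔ f.isChild j := by simp [children, isChild]

lemma card_parents : #f.parents = 2 := card_pair f.parents_ne

lemma card_children : #f.children = 2 := card_pair f.children_ne

lemma genOf_of_mem_parents (h : j ∈ f.parents) : genOf N j = f.gen := by
  rcases mem_insert.1 h with rfl | h
  · exact f.hj1
  · rw [mem_singleton.1 h, f.hj2]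

lemma genOf_of_mem_children (h : j ∈ f.children) : genOf N j = f.gen + 1 := by
  rcases mem_insert.1 h with rfl | h
  · exact f.hj3
  · rw [mem_singleton.1 h, f.hj4]

lemma disjoint_parents_children : Disjoint f.parents f.children :=
  disjoint_left.2 fun _ hp hc => by
    have := f.genOf_of_mem_parents hp
    have := f.genOf_of_mem_children hc
    omega

lemma vec_apply_s6 (j) :
    f.vec j = (if j ∈ f.parents then 1 else 0) - if j ∈ f.children then 1 else 0 := by
  have := disjoint_left.1 f.disjoint_parents_children
  simp only [vec, parents, children, Pi.sub_apply, Pi.add_apply, Pi.single_apply] at this ⊢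
  grind [f.parents_ne, f.children_ne]

lemma vec_ne_zero_iff (j) : f.vec j ≠ 0 ↔ j ∈ f.parents ∪ f.children := by
  have : j ∈ f.parents → j ∉ f.children := fun h =>
    disjoint_left.1 f.disjoint_parents_children h
  rw [vec_apply_s6, mem_union]
  split_ifs <;> simp_all

lemma vec_j1 : f.vec f.j1 = 1 := by
  have : f.j1 ∈ f.parents := by simp [parents]
  simp [vec_apply_s6, this, disjoint_left.1 f.disjoint_parents_children this]

lemma card_filter_smul_vec_ne_zero {c : ℤ} (hc : c ≠ 0) : #{j | (c • f.vec) j ≠ 0} = 4 := by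
  have : ({j | (c • f.vec) j ≠ 0} : Finset _) = f.parents ∪ f.children := by
    ext j
    rw [← vec_ne_zero_iff]
    simp [hc]
  rw [this, card_union_of_disjoint f.disjoint_parents_children, card_parents, card_children]

def ratVec : Fin (N * 2 ^ (N - 1)) → ℚ := fun j => f.vec j

lemma linearCombination_ratVec_apply (l : AbstractFamily N →₀ ℚ) (j) :
    linearCombination ℚ ratVec l j =
      ∑ g ∈ l.support with j ∈ g.parents, l g - ∑ g ∈ l.support with j ∈ g.children, l g := by
  simp only [linearCombination_apply, Finsupp.sum, Finset.sum_apply, Pi.smul_apply, ratVec,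
    vec_apply_s6, smul_eq_mul, sum_filter, ← sum_sub_distrib]
  push_cast
  refine sum_congr rfl fun g _ => ?_
  split_ifs <;> ring

def supportOfGen (l : AbstractFamily N →₀ ℚ) (i : ℕ) : Finset (AbstractFamily N) :=
  {g ∈ l.support | g.gen = i}

variable {l : AbstractFamily N →₀ ℚ} {i : ℕ}

lemma mem_supportOfGen {g : AbstractFamily N} :
    g ∈ supportOfGen l i ↔ g ∈ l.support ∧ g.gen = i :=
  mem_filter

lemma genOf_of_mem_biUnion_parents (h : j ∈ (supportOfGen l i).biUnion parents) :
    genOf N j = i := by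
  obtain ⟨g, hg, hjg⟩ := mem_biUnion.1 h
  rw [g.genOf_of_mem_parents hjg, (mem_supportOfGen.1 hg).2]

lemma genOf_of_mem_biUnion_children (h : j ∈ (supportOfGen l i).biUnion children) :
    genOf N j = i + 1 := by
  obtain ⟨g, hg, hjg⟩ := mem_biUnion.1 h
  rw [g.genOf_of_mem_children hjg, (mem_supportOfGen.1 hg).2]

end AbstractFamily

namespace IsGenTree

open AbstractFamily

variable {N : ℕ} {F : Set (AbstractFamily N)} {f g : AbstractFamily N}
  {j : Fin (N * 2 ^ (N - 1))}

lemma eq_of_mem_parents (hF : IsGenTree N F) (hf : f ∈ F) (hg : g ∈ F)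
    (hfj : j ∈ f.parents) (hgj : j ∈ g.parents) : f = g := by
  obtain ⟨u, -, hu⟩ := hF.parent_unique j (f.genOf_of_mem_parents hfj ▸ f.gen_le)
  exact (hu f ⟨hf, (f.genOf_of_mem_parents hfj).symm, f.mem_parents.1 hfj⟩).trans
    (hu g ⟨hg, (g.genOf_of_mem_parents hgj).symm, g.mem_parents.1 hgj⟩).symm

lemma eq_of_mem_children (hF : IsGenTree N F) (hf : f ∈ F) (hg : g ∈ F)
    (hfj : j ∈ f.children) (hgj : j ∈ g.children) : f = g := by
  have hfgen := f.genOf_of_mem_children hfj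
  have hggen := g.genOf_of_mem_children hgj
  obtain ⟨u, -, hu⟩ := hF.child_unique j (by have := f.gen_pos; omega)
  exact (hu f ⟨hf, by omega, f.mem_children.1 hfj⟩).trans
    (hu g ⟨hg, by omega, g.mem_children.1 hgj⟩).symm

lemma children_ne_parents (hF : IsGenTree N F) (hf : f ∈ F) (hg : g ∈ F) :
    f.children ≠ g.parents := by
  intro h
  have h3 : f.j3 ∈ g.parents := h ▸ by simp [children]
  have h4 : f.j4 ∈ g.parents := h ▸ by simp [children]
  have := f.children_ne
  simp only [parents, mem_insert, mem_singleton] at h3 h4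
  rcases h3 with h3 | h3
  · exact hF.sibling_ne_spouse f hf g hg f.j3 f.j4 f.j4 (.inl ⟨rfl, rfl⟩)
      (.inl ⟨h3, by grind⟩) rfl
  · exact hF.sibling_ne_spouse f hf g hg f.j3 f.j4 f.j4 (.inl ⟨rfl, rfl⟩)
      (.inr ⟨h3, by grind⟩) rfl

variable {S : Finset (AbstractFamily N)}

lemma card_biUnion_parents (hF : IsGenTree N F) (hS : ↑S ⊆ F) :
    #(S.biUnion parents) = 2 * #S := by
  rw [card_biUnion fun f hf g hg hfg => disjoint_left.2 fun _ hjf hjg =>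
    hfg (hF.eq_of_mem_parents (hS hf) (hS hg) hjf hjg)]
  simp [card_parents, mul_comm]

lemma card_biUnion_children (hF : IsGenTree N F) (hS : ↑S ⊆ F) :
    #(S.biUnion children) = 2 * #S := by
  rw [card_biUnion fun f hf g hg hfg => disjoint_left.2 fun _ hjf hjg =>
    hfg (hF.eq_of_mem_children (hS hf) (hS hg) hjf hjg)]
  simp [card_children, mul_comm]

variable {l : AbstractFamily N →₀ ℚ} {i i' : ℕ}

lemma sum_filter_mem_parents (hF : IsGenTree N F) (hlF : ↑l.support ⊆ F)
    (hf : f ∈ l.support) (hj : j ∈ f.parents) : ∑ g ∈ l.support with j ∈ g.parents, l g = l f :=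
  sum_eq_single_of_mem f (mem_filter.2 ⟨hf, hj⟩) fun g hg hgf => by
    rw [mem_filter] at hg
    exact absurd (hF.eq_of_mem_parents (hlF hg.1) (hlF hf) hg.2 hj) hgf

lemma sum_filter_mem_children (hF : IsGenTree N F) (hlF : ↑l.support ⊆ F)
    (hf : f ∈ l.support) (hj : j ∈ f.children) : ∑ g ∈ l.support with j ∈ g.children, l g = l f :=
  sum_eq_single_of_mem f (mem_filter.2 ⟨hf, hj⟩) fun g hg hgf => by
    rw [mem_filter] at hg
    exact absurd (hF.eq_of_mem_children (hlF hg.1) (hlF hf) hg.2 hj) hgf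

lemma linearCombination_apply_of_mem_parents (hF : IsGenTree N F) (hlF : ↑l.support ⊆ F)
    (hf : f ∈ l.support) (hj : j ∈ f.parents) (hno : ∀ g ∈ l.support, j ∉ g.children) :
    linearCombination ℚ ratVec l j = l f := by
  rw [linearCombination_ratVec_apply, hF.sum_filter_mem_parents hlF hf hj,
    filter_false_of_mem hno, sum_empty, sub_zero]

lemma linearCombination_apply_of_mem_children (hF : IsGenTree N F) (hlF : ↑l.support ⊆ F)
    (hf : f ∈ l.support) (hj : j ∈ f.children) (hno : ∀ g ∈ l.support, j ∉ g.parents) :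
    linearCombination ℚ ratVec l j = -l f := by
  rw [linearCombination_ratVec_apply, hF.sum_filter_mem_children hlF hf hj,
    filter_false_of_mem hno, sum_empty, zero_sub]

lemma exists_mem_parents_of_apply_eq_zero (hF : IsGenTree N F) (hlF : ↑l.support ⊆ F)
    (hf : f ∈ l.support) (hj : j ∈ f.children) (h0 : linearCombination ℚ ratVec l j = 0) :
    ∃ g ∈ l.support, j ∈ g.parents := by
  by_contra! hno
  rw [hF.linearCombination_apply_of_mem_children hlF hf hj hno, neg_eq_zero] at h0
  exact mem_support_iff.1 hf h0

lemma exists_mem_children_of_apply_eq_zero (hF : IsGenTree N F) (hlF : ↑l.support ⊆ F)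
    (hf : f ∈ l.support) (hj : j ∈ f.parents) (h0 : linearCombination ℚ ratVec l j = 0) :
    ∃ g ∈ l.support, j ∈ g.children := by
  by_contra! hno
  rw [hF.linearCombination_apply_of_mem_parents hlF hf hj hno] at h0
  exact mem_support_iff.1 hf h0

lemma biUnion_parents_subset (hF : IsGenTree N F) (hlF : ↑l.support ⊆ F)
    (hmin : ∀ g ∈ l.support, i ≤ g.gen) :
    (supportOfGen l i).biUnion parents ⊆
      ({j | linearCombination ℚ ratVec l j ≠ 0} : Finset _) := by
  intro j hj
  obtain ⟨f, hf, hjf⟩ := mem_biUnion.1 hj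
  rw [mem_supportOfGen] at hf
  have hno : ∀ g ∈ l.support, j ∉ g.children := fun g hg hjg => by
    have := g.genOf_of_mem_children hjg
    have := f.genOf_of_mem_parents hjf
    have := hmin g hg
    omega
  rw [mem_filter_univ, hF.linearCombination_apply_of_mem_parents hlF hf.1 hjf hno]
  exact mem_support_iff.1 hf.1

lemma biUnion_children_subset (hF : IsGenTree N F) (hlF : ↑l.support ⊆ F)
    (hmax : ∀ g ∈ l.support, g.gen ≤ i) :
    (supportOfGen l i).biUnion children ⊆
      ({j | linearCombination ℚ ratVec l j ≠ 0} : Finset _) := by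
  intro j hj
  obtain ⟨f, hf, hjf⟩ := mem_biUnion.1 hj
  rw [mem_supportOfGen] at hf
  have hno : ∀ g ∈ l.support, j ∉ g.parents := fun g hg hjg => by
    have := g.genOf_of_mem_parents hjg
    have := f.genOf_of_mem_children hjf
    have := hmax g hg
    omega
  rw [mem_filter_univ, hF.linearCombination_apply_of_mem_children hlF hf.1 hjf hno,
    neg_ne_zero]
  exact mem_support_iff.1 hf.1

lemma card_biUnion_parents_union_biUnion_children (hF : IsGenTree N F) (hlF : ↑l.support ⊆ F)
    (hii' : i ≤ i') :
    #((supportOfGen l i).biUnion parents ∪ (supportOfGen l i').biUnion children) =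
      2 * #(supportOfGen l i) + 2 * #(supportOfGen l i') := by
  have hsub : ∀ k, ↑(supportOfGen l k) ⊆ F := fun k g hg => hlF (mem_supportOfGen.1 hg).1
  rw [card_union_of_disjoint (disjoint_left.2 fun j hp hc => by
      have := genOf_of_mem_biUnion_parents hp
      have := genOf_of_mem_biUnion_children hc
      omega),
    hF.card_biUnion_parents (hsub i), hF.card_biUnion_children (hsub i')]

lemma exists_genOf_eq_succ_apply_ne_zero (hF : IsGenTree N F) (hlF : ↑l.support ⊆ F)
    (hf : f ∈ l.support) (huniq : ∀ g ∈ l.support, g.gen = f.gen → g = f) :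
    ∃ j, genOf N j = f.gen + 1 ∧ linearCombination ℚ ratVec l j ≠ 0 := by
  by_contra! h0
  have hj3 : f.j3 ∈ f.children := by simp [children]
  obtain ⟨g, hg, hj3g⟩ := hF.exists_mem_parents_of_apply_eq_zero hlF hf hj3
    (h0 _ (f.genOf_of_mem_children hj3))
  have hggen : g.gen = f.gen + 1 := by
    rw [← g.genOf_of_mem_parents hj3g, f.genOf_of_mem_children hj3]
  have hsub : g.parents ⊆ f.children := fun p hp => by
    have hpgen := g.genOf_of_mem_parents hp
    obtain ⟨h, hh, hph⟩ :=
      hF.exists_mem_children_of_apply_eq_zero hlF hg hp (h0 p (by omega))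
    have hhgen := h.genOf_of_mem_children hph
    rwa [← huniq h hh (by omega)]
  exact hF.children_ne_parents (hlF hf) (hlF hg)
    (eq_of_subset_of_card_le hsub (by rw [card_parents, card_children])).symm

lemma four_le_card_support (hF : IsGenTree N F) (hlF : ↑l.support ⊆ F) (hl : l ≠ 0) :
    4 ≤ #{j | linearCombination ℚ ratVec l j ≠ 0} := by
  obtain ⟨f₀, hf₀, hmin⟩ := l.support.exists_min_image gen (support_nonempty_iff.2 hl)
  obtain ⟨f₁, hf₁, hmax⟩ := l.support.exists_max_image gen (support_nonempty_iff.2 hl)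
  have h₀ : 0 < #(supportOfGen l f₀.gen) := card_pos.2 ⟨f₀, mem_supportOfGen.2 ⟨hf₀, rfl⟩⟩
  have h₁ : 0 < #(supportOfGen l f₁.gen) := card_pos.2 ⟨f₁, mem_supportOfGen.2 ⟨hf₁, rfl⟩⟩
  have := card_le_card (union_subset (hF.biUnion_parents_subset hlF hmin)
    (hF.biUnion_children_subset hlF hmax))
  rw [hF.card_biUnion_parents_union_biUnion_children hlF (hmin f₁ hf₁)] at this
  omega

lemma exists_support_eq_singleton (hF : IsGenTree N F) (hlF : ↑l.support ⊆ F) (hl : l ≠ 0)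
    (h4 : #{j | linearCombination ℚ ratVec l j ≠ 0} ≤ 4) : ∃ f, l.support = {f} := by
  obtain ⟨f₀, hf₀, hmin⟩ := l.support.exists_min_image gen (support_nonempty_iff.2 hl)
  obtain ⟨f₁, hf₁, hmax⟩ := l.support.exists_max_image gen (support_nonempty_iff.2 hl)
  have h₀ : 0 < #(supportOfGen l f₀.gen) := card_pos.2 ⟨f₀, mem_supportOfGen.2 ⟨hf₀, rfl⟩⟩
  have h₁ : 0 < #(supportOfGen l f₁.gen) := card_pos.2 ⟨f₁, mem_supportOfGen.2 ⟨hf₁, rfl⟩⟩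
  have hsub := union_subset (hF.biUnion_parents_subset hlF hmin)
    (hF.biUnion_children_subset hlF hmax)
  have hcard := card_le_card hsub
  rw [hF.card_biUnion_parents_union_biUnion_children hlF (hmin f₁ hf₁)] at hcard
  have hsupp := eq_of_subset_of_card_le hsub (by
    rw [hF.card_biUnion_parents_union_biUnion_children hlF (hmin f₁ hf₁)]
    omega)
  have huniq : ∀ g ∈ l.support, g.gen = f₀.gen → g = f₀ := fun g hg hgen =>
    card_le_one.1 (by omega) g (mem_supportOfGen.2 ⟨hg, hgen⟩) f₀
      (mem_supportOfGen.2 ⟨hf₀, rfl⟩)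
  obtain ⟨j, hjgen, hj⟩ := hF.exists_genOf_eq_succ_apply_ne_zero hlF hf₀ huniq
  have hgen : f₁.gen = f₀.gen := by
    rcases mem_union.1 (hsupp ▸ mem_filter_univ j |>.2 hj) with hj | hj
    · have := genOf_of_mem_biUnion_parents hj
      omega
    · have := genOf_of_mem_biUnion_children hj
      omega
  exact ⟨f₀, eq_singleton_iff_unique_mem.2 ⟨hf₀, fun g hg =>
    huniq g hg (le_antisymm (hgen ▸ hmax g hg) (hmin g hg))⟩⟩

end IsGenTree

theorem stmt6_general (N : ℕ) (F : Set (AbstractFamily N)) (hF : IsGenTree N F)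
    (lam : Fin (N * 2 ^ (N - 1)) → ℤ) (hlam : lam ≠ 0)
    (hspan : (fun j => (lam j : ℚ)) ∈
      Submodule.span ℚ ((fun f : AbstractFamily N => fun j => ((f.vec j : ℚ))) '' F)) :
    4 ≤ (Finset.univ.filter fun j => lam j ≠ 0).card ∧
      ((Finset.univ.filter fun j => lam j ≠ 0).card = 4 ↔
        ∃ f ∈ F, ∃ c : ℤ, c ≠ 0 ∧ lam = c • f.vec) := by
  obtain ⟨l, hlF, hl⟩ := (mem_span_image_iff_linearCombination ℚ).1 hspan
  replace hl : linearCombination ℚ AbstractFamily.ratVec l = fun j => (lam j : ℚ) := hl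
  have hsupp : ({j | lam j ≠ 0} : Finset _) =
      ({j | linearCombination ℚ AbstractFamily.ratVec l j ≠ 0} : Finset _) := by
    simp [hl]
  have hl0 : l ≠ 0 := by
    rintro rfl
    exact hlam (funext fun j => by simpa using (congrFun hl j).symm)
  refine ⟨hsupp ▸ hF.four_le_card_support hlF hl0, fun h4 => ?_, ?_⟩
  · obtain ⟨f, hf⟩ := hF.exists_support_eq_singleton hlF hl0 (hsupp ▸ h4.le)
    obtain ⟨hlf, hlsingle⟩ := support_eq_singleton.1 hf
    have hcomb : linearCombination ℚ AbstractFamily.ratVec l = l f • f.ratVec := by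
      rw [hlsingle, linearCombination_single, single_eq_same]
    have hlam_eq : ∀ j, (lam j : ℚ) = l f * f.vec j := fun j => by
      rw [← congrFun hl j, hcomb]
      rfl
    have hlam_j1 : (lam f.j1 : ℚ) = l f := by simpa [f.vec_j1] using hlam_eq f.j1
    refine ⟨f, hlF (by simp [hf]), lam f.j1, ?_, funext fun j => ?_⟩
    · exact_mod_cast hlam_j1 ▸ hlf
    · exact_mod_cast hlam_j1 ▸ hlam_eq j
  · rintro ⟨f, -, c, hc, rfl⟩
    exact f.card_filter_smul_vec_ne_zero hc

/-- Every nonzero `λ ∈ ⟨F⟩ = span_ℚ(F) ∩ ℤ^m` has support of cardinality at least `4`,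
and its support has cardinality exactly `4` if and only if `λ` is a nonzero integer
multiple of the vector of a single abstract family of `F`. -/
theorem stmt6 (N : ℕ) (hN : 2 ≤ N) (F : Set (AbstractFamily N)) (hF : IsGenTree N F)
    (lam : Fin (N * 2 ^ (N - 1)) → ℤ) (hlam : lam ≠ 0)
    (hspan : (fun j => (lam j : ℚ)) ∈
      Submodule.span ℚ ((fun f : AbstractFamily N => fun j => ((f.vec j : ℚ))) '' F)) :
    4 ≤ (Finset.univ.filter fun j => lam j ≠ 0).card ∧
      ((Finset.univ.filter fun j => lam j ≠ 0).card = 4 ↔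
        ∃ f ∈ F, ∃ c : ℤ, c ≠ 0 ∧ lam = c • f.vec) :=
  stmt6_general N F hF lam hlam hspan
end

section
/- Let p_1, p_2 ∈ ℝ² with p_1 ≠ p_2, set τ = (O − I)(p_1 − p_2) where O = [[0,1],[−1,0]], and for k ∈ ℤ define τ_k = (k·I + O)τ and P_{τ_k} = p_1 − (⟨p_1 − p_2, τ_k⟩ / |τ_k|²) τ_k. Then each P_{τ_k} lies on the circle {w : ⟨w − p_1, w − p_2⟩ = 0}, one has the explicit formula P_{τ_k} = p_1 + ((k+1)/(2(k²+1))) τ_k, and the distance from P_{τ_k} to the point P_τ := p_1 + τ/2 satisfies dist(P_{τ_k}, P_τ) = |p_1 − p_2| / √(k²+1). -/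
/-- Rotation of a point of `ℝ²` by the matrix `O` with rows `(0,1)`, `(−1,0)`. -/
noncomputable def rot2 (v : EuclideanSpace ℝ (Fin 2)) : EuclideanSpace ℝ (Fin 2) :=
  (WithLp.equiv 2 (Fin 2 → ℝ)).symm ![v 1, -v 0]

/-- Parameterization of rational points on the circle with diameter `[p₁, p₂]`: with
`τ = (O − I)(p₁ − p₂)`, `τ_k = (k·I + O)τ` and
`P_{τ_k} = p₁ − (⟨p₁ − p₂, τ_k⟩/|τ_k|²) τ_k`, the point `P_{τ_k}` lies on the circle
`{w : ⟨w − p₁, w − p₂⟩ = 0}`, it equals `p₁ + ((k+1)/(2(k²+1))) τ_k`, and its distance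
to `P_τ = p₁ + τ/2` equals `|p₁ − p₂|/√(k²+1)`. -/
theorem stmt13 (p₁ p₂ : EuclideanSpace ℝ (Fin 2)) (hne : p₁ ≠ p₂) (k : ℤ) :
    let τ : EuclideanSpace ℝ (Fin 2) := rot2 (p₁ - p₂) - (p₁ - p₂)
    let τk : EuclideanSpace ℝ (Fin 2) := (k : ℝ) • τ + rot2 τ
    let P : EuclideanSpace ℝ (Fin 2) :=
      p₁ - ((inner ℝ (p₁ - p₂) τk : ℝ) / ‖τk‖ ^ 2) • τk
    (inner ℝ (P - p₁) (P - p₂) = (0 : ℝ)) ∧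
      P = p₁ + (((k : ℝ) + 1) / (2 * ((k : ℝ) ^ 2 + 1))) • τk ∧
      dist P (p₁ + (2 : ℝ)⁻¹ • τ) = ‖p₁ - p₂‖ / Real.sqrt ((k : ℝ) ^ 2 + 1) := by
  intro τ τk P
  set a : ℝ := p₁ 0 - p₂ 0 with ha
  set b : ℝ := p₁ 1 - p₂ 1 with hb
  have hab : a ^ 2 + b ^ 2 ≠ 0 := by
    intro h
    apply hne
    have ha0 : a = 0 := by nlinarith [sq_nonneg a, sq_nonneg b]
    have hb0 : b = 0 := by nlinarith [sq_nonneg a, sq_nonneg b]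
    ext i
    fin_cases i
    · simpa using by linarith [ha ▸ ha0]
    · simpa using by linarith [hb ▸ hb0]
  have hk1 : (k : ℝ) ^ 2 + 1 ≠ 0 := by positivity
  have h0 : τk 0 = (k:ℝ)*(b - a) + (-a - b) := by
    simp [τk, τ, rot2, WithLp.equiv_symm_apply, PiLp.toLp_apply, ha, hb]
  have h1 : τk 1 = (k:ℝ)*(-a - b) + (a - b) := by
    simp [τk, τ, rot2, WithLp.equiv_symm_apply, PiLp.toLp_apply, ha, hb]
  have hτ0 : τ 0 = b - a := by
    simp [τ, rot2, WithLp.equiv_symm_apply, PiLp.toLp_apply, ha, hb]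
  have hτ1 : τ 1 = -a - b := by
    simp [τ, rot2, WithLp.equiv_symm_apply, PiLp.toLp_apply, ha, hb]
  have hn : ‖τk‖ ^ 2 = 2 * ((k:ℝ)^2 + 1) * (a^2 + b^2) := by
    rw [← real_inner_self_eq_norm_sq, PiLp.inner_apply, Fin.sum_univ_two, h0, h1]
    simp only [RCLike.inner_apply, conj_trivial]
    ring
  have hin : (inner ℝ (p₁ - p₂) τk : ℝ) = -((k:ℝ)+1) * (a^2+b^2) := by
    rw [PiLp.inner_apply, Fin.sum_univ_two, h0, h1]
    simp only [RCLike.inner_apply, conj_trivial, PiLp.sub_apply, ← ha, ← hb]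
    ring
  have hr : (inner ℝ (p₁ - p₂) τk : ℝ) / ‖τk‖ ^ 2 = -(((k:ℝ)+1) / (2*((k:ℝ)^2+1))) := by
    rw [hin, hn]
    field_simp
  have hP : P = p₁ + (((k : ℝ) + 1) / (2 * ((k : ℝ) ^ 2 + 1))) • τk := by
    rw [show P = p₁ - ((inner ℝ (p₁ - p₂) τk : ℝ) / ‖τk‖ ^ 2) • τk from rfl, hr,
      neg_smul, sub_neg_eq_add]
  refine ⟨?_, hP, ?_⟩
  · rw [hP, PiLp.inner_apply, Fin.sum_univ_two]
    simp only [RCLike.inner_apply, conj_trivial, PiLp.sub_apply, PiLp.add_apply,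
      PiLp.smul_apply, smul_eq_mul, h0, h1, ← ha, ← hb]
    field_simp
    ring
  · rw [hP, dist_eq_norm, EuclideanSpace.norm_eq, Fin.sum_univ_two]
    simp only [PiLp.sub_apply, PiLp.add_apply, PiLp.smul_apply, smul_eq_mul, h0, h1, hτ0, hτ1,
      Real.norm_eq_abs, sq_abs]
    have hnn : ‖p₁ - p₂‖ = Real.sqrt (a^2 + b^2) := by
      rw [EuclideanSpace.norm_eq, Fin.sum_univ_two]
      simp [PiLp.sub_apply, ← ha, ← hb, sq]
    rw [hnn, ← Real.sqrt_div (by positivity)]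
    congr 1
    field_simp
    ring
end
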